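/- arXiv:1011.5731 — 5 statements merged into one kernel-verified Lean document; each statement's English description precedes it below -/
import Mathlib

section
/- Let X be a smooth vector field on a manifold M with flow Φ_X defined on the open set D_X ⊆ ℝ × M, and let g : M → ℝ be smooth and nowhere vanishing. Fix t₀ ∈ ℝ and a smooth function σ_{t₀} : M → ℝ. Define σ(t,x) = σ_{t₀}(Φ_X(t₀−t,x)) + ∫_{t₀}^t g(Φ_X(τ−t,x)) dτ on the set W_{t₀} = {(t,x) : (t₀−t,x) ∈ D_X}. Then W_{t₀} is an open neighbourhood of {t₀} × M and for every solution φ of dφ/dt = X(φ(t)) defined on an interval containing t₀, one has d/dt σ(t,φ(t)) = g(φ(t)). -/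
/-- Let `X` be a smooth vector field with flow `Φ` on the open domain
`D ⊆ ℝ × M`, `g` smooth and nowhere vanishing, `t₀ ∈ ℝ` and `σ_{t₀}` smooth.  Define
`σ(t,x) = σ_{t₀}(Φ(t₀-t,x)) + ∫_{t₀}^t g(Φ(τ-t,x)) dτ` on
`W_{t₀} = {(t,x) : (t₀-t,x) ∈ D}`.  Then `W_{t₀}` is an open neighbourhood of
`{t₀} × M` and for every solution `φ` of `dφ/dt = X(φ(t))` on an open interval
containing `t₀` one has `d/dt σ(t,φ(t)) = g(φ(t))`. -/
theorem existence_of_time_primitive_along_flow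
    {E : Type*} [NormedAddCommGroup E] [NormedSpace ℝ E]
    (X : E → E) (g : E → ℝ) (σt₀ : E → ℝ)
    (hX : ContDiff ℝ (⊤ : ℕ∞) X) (hg : ContDiff ℝ (⊤ : ℕ∞) g) (hg0 : ∀ x, g x ≠ 0)
    (hσt₀ : ContDiff ℝ (⊤ : ℕ∞) σt₀)
    (t₀ : ℝ)
    (Φ : ℝ → E → E) (D : Set (ℝ × E)) (hD : IsOpen D)
    (hD0 : ∀ x, ((0 : ℝ), x) ∈ D)
    (hΦ0 : ∀ x, Φ 0 x = x)
    (hΦ : ∀ t x, (t, x) ∈ D → HasDerivAt (fun s => Φ s x) (X (Φ t x)) t)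
    (hgrp : ∀ t s x, (s, x) ∈ D → (t, Φ s x) ∈ D →
      (t + s, x) ∈ D ∧ Φ t (Φ s x) = Φ (t + s) x)
    (σ : ℝ → E → ℝ)
    (hσdef : ∀ t x, (t₀ - t, x) ∈ D →
      σ t x = σt₀ (Φ (t₀ - t) x) + ∫ τ in t₀..t, g (Φ (τ - t) x)) :
    -- `W_{t₀}` is an open neighbourhood of `{t₀} × M` …
    IsOpen {q : ℝ × E | (t₀ - q.1, q.2) ∈ D} ∧
    (∀ x, (t₀, x) ∈ {q : ℝ × E | (t₀ - q.1, q.2) ∈ D}) ∧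
    -- … and along every solution `φ` of `X` through `t₀`, `d/dt σ(t,φ(t)) = g(φ(t))`:
    (∀ (a b : ℝ) (x₀ : E) (φ : ℝ → E), t₀ ∈ Set.Ioo a b →
      (∀ t ∈ Set.Ioo a b, (t - t₀, x₀) ∈ D ∧ φ t = Φ (t - t₀) x₀) →
      ∀ t ∈ Set.Ioo a b, HasDerivAt (fun s => σ s (φ s)) (g (φ t)) t) := by

  constructor
  · exact hD.preimage (by fun_prop)
  refine ⟨fun x => by show (t₀ - t₀, x) ∈ D; simpa using hD0 x, ?_⟩
  intro a b x₀ φ ht₀ hφ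
  have hmem : ∀ t ∈ Set.Ioo a b, (t - t₀, x₀) ∈ D := fun t ht => (hφ t ht).1
  -- local iff lemma
  have hEv : ∀ t ∈ Set.Ioo a b, ∀ᶠ t' in nhds t,
      ((t₀ - t, Φ (t - t₀) x₀) ∈ D ↔ (t₀ - t', Φ (t' - t₀) x₀) ∈ D) := by
    intro t ht
    set y := Φ (t - t₀) x₀ with hy
    have h1 : ∀ᶠ t' in nhds t, (t' - t, y) ∈ D := by
      have hc : ContinuousAt (fun t' : ℝ => ((t' - t, y) : ℝ × E)) t := by fun_prop
      have h0 : ((fun t' : ℝ => ((t' - t, y) : ℝ × E)) t) ∈ D := by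
        simpa using hD0 y
      exact hc.preimage_mem_nhds (hD.mem_nhds h0)
    have hcy : ContinuousAt (fun s => Φ s y) 0 := (hΦ 0 y (hD0 y)).continuousAt
    have hcy' : ContinuousAt (fun t' : ℝ => Φ (t' - t) y) t := by
      have h0 : ContinuousAt (fun s => Φ s y) (t - t) := by simpa using hcy
      have hf : ContinuousAt (fun t' : ℝ => t' - t) t := by fun_prop
      exact ContinuousAt.comp (f := fun t' : ℝ => t' - t) h0 hf
    have h2 : ∀ᶠ t' in nhds t, (t - t', Φ (t' - t) y) ∈ D := by
      have hc : ContinuousAt (fun t' : ℝ => ((t - t', Φ (t' - t) y) : ℝ × E)) t :=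
        ((continuous_const.sub continuous_id).continuousAt).prodMk hcy'
      have h0 : ((fun t' : ℝ => ((t - t', Φ (t' - t) y) : ℝ × E)) t) ∈ D := by
        simpa [hΦ0] using hD0 y
      exact hc.preimage_mem_nhds (hD.mem_nhds h0)
    filter_upwards [h1, h2] with t' h1' h2'
    have hIxt : (t - t₀, x₀) ∈ D := hmem t ht
    have heq' : Φ (t' - t) y = Φ (t' - t₀) x₀ := by
      have hgl := (hgrp (t' - t) (t - t₀) x₀ hIxt h1').2
      have h5 : t' - t + (t - t₀) = t' - t₀ := by ring
      rw [h5] at hgl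
      exact hgl
    have hzero : Φ (t - t') (Φ (t' - t) y) = y := by
      have hz := (hgrp (t - t') (t' - t) y h1' h2').2
      have h5 : t - t' + (t' - t) = 0 := by ring
      rw [h5, hΦ0] at hz
      exact hz
    constructor
    · intro hPt
      have h3 : (t₀ - t, Φ (t - t') (Φ (t' - t) y)) ∈ D := by rw [hzero]; exact hPt
      have h4 := (hgrp (t₀ - t) (t - t') (Φ (t' - t) y) h2' h3).1
      have h5 : t₀ - t + (t - t') = t₀ - t' := by ring
      rw [h5, heq'] at h4
      exact h4
    · intro hPt'
      have h3 : (t₀ - t', Φ (t' - t) y) ∈ D := by rw [heq']; exact hPt'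
      have h4 := (hgrp (t₀ - t') (t' - t) y h1' h3).1
      have h5 : t₀ - t' + (t' - t) = t₀ - t := by ring
      rw [h5] at h4
      exact h4
  -- connectedness: the backward-time membership holds on all of Ioo a b
  have hP0 : (t₀ - t₀, Φ (t₀ - t₀) x₀) ∈ D := by simpa [hΦ0] using hD0 x₀
  have key : ∀ t ∈ Set.Ioo a b, (t₀ - t, Φ (t - t₀) x₀) ∈ D := by
    by_contra hk
    push_neg at hk
    obtain ⟨t1, ht1, hPt1⟩ := hk
    choose! u hup huo hut using fun t ht => eventually_nhds_iff.mp (hEv t ht)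
    set A : Set ℝ := {s ∈ Set.Ioo a b | (t₀ - s, Φ (s - t₀) x₀) ∈ D} with hA
    set B : Set ℝ := {s ∈ Set.Ioo a b | (t₀ - s, Φ (s - t₀) x₀) ∉ D} with hB
    set U : Set ℝ := ⋃ t ∈ A, u t with hU
    set V : Set ℝ := ⋃ t ∈ B, u t with hV
    have hUo : IsOpen U := isOpen_biUnion fun t ht => huo t ht.1
    have hVo : IsOpen V := isOpen_biUnion fun t ht => huo t ht.1
    have hsub : Set.Ioo a b ⊆ U ∪ V := by
      intro t ht
      by_cases h : (t₀ - t, Φ (t - t₀) x₀) ∈ D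
      · exact Or.inl (Set.mem_biUnion ⟨ht, h⟩ (hut t ht))
      · exact Or.inr (Set.mem_biUnion ⟨ht, h⟩ (hut t ht))
    have hUne : (Set.Ioo a b ∩ U).Nonempty :=
      ⟨t₀, ht₀, Set.mem_biUnion ⟨ht₀, hP0⟩ (hut t₀ ht₀)⟩
    have hVne : (Set.Ioo a b ∩ V).Nonempty :=
      ⟨t1, ht1, Set.mem_biUnion ⟨ht1, hPt1⟩ (hut t1 ht1)⟩
    obtain ⟨z, hzI, hzU, hzV⟩ := isPreconnected_Ioo U V hUo hVo hsub hUne hVne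
    obtain ⟨t2, ht2, hz2⟩ := Set.mem_iUnion₂.mp hzU
    obtain ⟨t3, ht3, hz3⟩ := Set.mem_iUnion₂.mp hzV
    exact ht3.2 ((hup t3 ht3.1 z hz3).mpr ((hup t2 ht2.1 z hz2).mp ht2.2))
  -- derivative of the flow curve
  have hφd : ∀ s ∈ Set.Ioo a b,
      HasDerivAt (fun r : ℝ => Φ (r - t₀) x₀) (X (Φ (s - t₀) x₀)) s := by
    intro s hs
    have h := (hΦ (s - t₀) x₀ (hmem s hs)).scomp s ((hasDerivAt_id s).sub_const t₀)
    simpa [Function.comp_def] using h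
  intro t ht
  have hfa : ∀ s ∈ Set.Ioo a b, ContinuousAt (fun τ : ℝ => g (Φ (τ - t₀) x₀)) s :=
    fun s hs => (hg.continuous.continuousAt).comp (hφd s hs).continuousAt
  have hfc : ContinuousOn (fun τ : ℝ => g (Φ (τ - t₀) x₀)) (Set.Ioo a b) :=
    fun s hs => (hfa s hs).continuousWithinAt
  have huIcc : Set.uIcc t₀ t ⊆ Set.Ioo a b :=
    Set.ordConnected_Ioo.uIcc_subset ht₀ ht
  have hint : IntervalIntegrable (fun τ : ℝ => g (Φ (τ - t₀) x₀)) MeasureTheory.volume t₀ t :=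
    (hfc.mono huIcc).intervalIntegrable
  have hmeas : StronglyMeasurableAtFilter (fun τ : ℝ => g (Φ (τ - t₀) x₀)) (nhds t) :=
    hfc.stronglyMeasurableAtFilter isOpen_Ioo t ht
  have hFTC := intervalIntegral.integral_hasDerivAt_right hint hmeas (hfa t ht)
  have hF := hFTC.const_add (σt₀ x₀)
  have heqF : (fun s => σ s (φ s)) =ᶠ[nhds t]
      fun s : ℝ => σt₀ x₀ + ∫ τ in t₀..s, g (Φ (τ - t₀) x₀) := by
    filter_upwards [isOpen_Ioo.mem_nhds ht] with s hs
    have hφs : φ s = Φ (s - t₀) x₀ := (hφ s hs).2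
    have hkey : (t₀ - s, Φ (s - t₀) x₀) ∈ D := key s hs
    have hσ := hσdef s (φ s) (by rw [hφs]; exact hkey)
    have hx0 : Φ (t₀ - s) (Φ (s - t₀) x₀) = x₀ := by
      have h := (hgrp (t₀ - s) (s - t₀) x₀ (hmem s hs) hkey).2
      have h5 : t₀ - s + (s - t₀) = 0 := by ring
      rw [h5, hΦ0] at h
      exact h
    have huIccs : Set.uIcc t₀ s ⊆ Set.Ioo a b :=
      Set.ordConnected_Ioo.uIcc_subset ht₀ hs
    have hint_eq : (∫ τ in t₀..s, g (Φ (τ - s) (φ s))) =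
        ∫ τ in t₀..s, g (Φ (τ - t₀) x₀) := by
      apply intervalIntegral.integral_congr
      intro τ hτ
      have hτI : τ ∈ Set.Ioo a b := huIccs hτ
      have hyp2 : (τ - t₀, Φ (t₀ - s) (Φ (s - t₀) x₀)) ∈ D := by
        rw [hx0]; exact hmem τ hτI
      have h := (hgrp (τ - t₀) (t₀ - s) (Φ (s - t₀) x₀) hkey hyp2).2
      have h5 : τ - t₀ + (t₀ - s) = τ - s := by ring
      rw [h5, hx0] at h
      show g (Φ (τ - s) (φ s)) = g (Φ (τ - t₀) x₀)
      rw [hφs, ← h]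
    rw [hσ, hφs, hx0, ← hφs, hint_eq]
  have hres := hF.congr_of_eventuallyEq heqF
  rw [(hφ t ht).2]
  exact hres
end

section
/- For a motion of the Kepler problem with nonzero angular momentum L = L e_z (L ≠ 0), the momentum vector satisfies p(θ) = (m²k/L)(−sin θ e_x + cos θ e_y) + c for some constant vector c, where θ is the polar angle of r in the plane orthogonal to L. Consequently the hodograph (the curve traced by p) lies on a circle of radius R = m²k/|L| centered at c. -/
/-- The cross product on Euclidean 3-space. -/
noncomputable def cross (a b : EuclideanSpace ℝ (Fin 3)) : EuclideanSpace ℝ (Fin 3) :=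
  WithLp.toLp 2 ![a 1 * b 2 - a 2 * b 1, a 2 * b 0 - a 0 * b 2, a 0 * b 1 - a 1 * b 0]

noncomputable def ex : EuclideanSpace ℝ (Fin 3) := EuclideanSpace.single 0 1
noncomputable def ey : EuclideanSpace ℝ (Fin 3) := EuclideanSpace.single 1 1
noncomputable def ez : EuclideanSpace ℝ (Fin 3) := EuclideanSpace.single 2 1

/-!
Write `r = ρ e_r(θ)` with `e_r(θ) = cos θ e_x + sin θ e_y`, `e_θ(θ) = -sin θ e_x + cos θ e_y`.
Differentiating gives `dr/dt = ρ' e_r + ρ θ' e_θ`, so `r × p = m ρ² θ' e_z`: `L = m ρ² θ'`.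
Since `d/dt e_θ(θ) = -θ' e_r`, the Kepler force `-(k m / ρ²) e_r` equals
`(m² k / L) d/dt e_θ(θ)`; hence `p - (m² k / L) e_θ(θ)` has zero derivative and is a
constant `c`, and `‖p - c‖ = m² k / |L|` because `e_θ` is a unit vector.
-/

local notation "E³" => EuclideanSpace ℝ (Fin 3)

open Real

noncomputable section

def radialUnit (φ : ℝ) : E³ := cos φ • ex + sin φ • ey

def azimuthalUnit (φ : ℝ) : E³ := -sin φ • ex + cos φ • ey

end

theorem norm_azimuthalUnit (φ : ℝ) : ‖azimuthalUnit φ‖ = 1 := by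
  rw [EuclideanSpace.norm_eq, Fin.sum_univ_three]
  simp [azimuthalUnit, ex, ey]

section Derivatives

variable {θ : ℝ → ℝ} {θ' t : ℝ}

theorem hasDerivAt_radialUnit (hθ : HasDerivAt θ θ' t) :
    HasDerivAt (fun s => radialUnit (θ s)) (θ' • azimuthalUnit (θ t)) t := by
  refine ((hθ.cos.smul_const ex).add (hθ.sin.smul_const ey)).congr_deriv ?_
  simp only [azimuthalUnit, smul_add, smul_smul]
  module

theorem hasDerivAt_azimuthalUnit (hθ : HasDerivAt θ θ' t) :
    HasDerivAt (fun s => azimuthalUnit (θ s)) (-θ' • radialUnit (θ t)) t := by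
  refine ((hθ.sin.neg.smul_const ex).add (hθ.cos.smul_const ey)).congr_deriv ?_
  simp only [radialUnit, smul_add, smul_smul]
  module

theorem hasDerivAt_smul_radialUnit {ρ : ℝ → ℝ} {ρ' : ℝ} (hρ : HasDerivAt ρ ρ' t)
    (hθ : HasDerivAt θ θ' t) :
    HasDerivAt (fun s => ρ s • radialUnit (θ s))
      (ρ' • radialUnit (θ t) + (ρ t * θ') • azimuthalUnit (θ t)) t := by
  refine (hρ.smul (hasDerivAt_radialUnit hθ)).congr_deriv ?_
  rw [smul_smul, add_comm]

end Derivatives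

theorem cross_smul_right (a b : E³) (c : ℝ) : cross a (c • b) = c • cross a b := by
  ext i
  fin_cases i <;> simp [cross] <;> ring

theorem cross_smul_radialUnit (a b c φ : ℝ) :
    cross (a • radialUnit φ) (b • radialUnit φ + c • azimuthalUnit φ) = (a * c) • ez := by
  have h := sin_sq_add_cos_sq φ
  ext i
  fin_cases i <;> simp [cross, radialUnit, azimuthalUnit, ex, ey, ez]
  linear_combination a * c * h

theorem ez_ne_zero : ez ≠ 0 := by
  simp [ez]

theorem cross_eq_norm_sq_mul_smul_ez_of_polar {r : ℝ → E³} {v : E³} {θ : ℝ → ℝ}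
    {θ' t : ℝ} (hr : HasDerivAt r v t) (hr0 : r t ≠ 0) (hθ : HasDerivAt θ θ' t)
    (hpolar : ∀ s, r s = ‖r s‖ • radialUnit (θ s)) :
    cross (r t) v = (‖r t‖ ^ 2 * θ') • ez := by
  have hρ := ((hr.differentiableAt).norm ℝ hr0).hasDerivAt
  have hv := hr.unique <| (hasDerivAt_smul_radialUnit hρ hθ).congr_of_eventuallyEq <|
    Filter.Eventually.of_forall hpolar
  rw [hv, congrArg cross (hpolar t), cross_smul_radialUnit, sq, mul_assoc]

theorem kepler_force_eq_smul_deriv_azimuthalUnit {m k L ρ θ' : ℝ} (hm : m ≠ 0)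
    (hL : L ≠ 0) (hρ : ρ ≠ 0) (hrate : m * ρ ^ 2 * θ' = L) (φ : ℝ) :
    -(k * m / ρ ^ 3) • (ρ • radialUnit φ) = (m ^ 2 * k / L) • (-θ' • radialUnit φ) := by
  have hθ' : θ' = L / (m * ρ ^ 2) := by
    rw [eq_div_iff (mul_ne_zero hm (pow_ne_zero 2 hρ))]
    linarith
  rw [smul_smul, smul_smul, hθ']
  congr 1
  field_simp

/-- Hamilton: For a Kepler motion with nonzero angular momentum
`r × p = L e_z` (`L ≠ 0`), writing `θ(t)` for the polar angle of `r` in the plane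
orthogonal to `L`, the momentum satisfies
`p = (m²k/L)(-sin θ e_x + cos θ e_y) + c` for some constant vector `c`;
consequently the hodograph lies on the circle of radius `m²k/|L|` centered at `c`. -/
theorem kepler_hodograph_circle
    (m k L : ℝ) (hm : 0 < m) (hk : 0 < k) (hL : L ≠ 0)
    (r p : ℝ → EuclideanSpace ℝ (Fin 3))
    (hr0 : ∀ t, r t ≠ 0)
    (hr : ∀ t, HasDerivAt r ((1 / m) • p t) t)
    (hp : ∀ t, HasDerivAt p (-(k * m / ‖r t‖ ^ 3) • r t) t)
    (hang : ∀ t, cross (r t) (p t) = L • ez)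
    (θ : ℝ → ℝ) (hθdiff : Differentiable ℝ θ)
    (hθ : ∀ t, r t = ‖r t‖ • (Real.cos (θ t) • ex + Real.sin (θ t) • ey)) :
    ∃ c : EuclideanSpace ℝ (Fin 3),
      (∀ t, p t = (m ^ 2 * k / L) • (-Real.sin (θ t) • ex + Real.cos (θ t) • ey) + c) ∧
      (∀ t, ‖p t - c‖ = m ^ 2 * k / |L|) := by
  have hpolar : ∀ t, r t = ‖r t‖ • radialUnit (θ t) := hθ
  have hθ' : ∀ t, HasDerivAt θ (deriv θ t) t := fun t => (hθdiff t).hasDerivAt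
  have hrate : ∀ t, m * ‖r t‖ ^ 2 * deriv θ t = L := fun t => by
    have h := cross_eq_norm_sq_mul_smul_ez_of_polar (hr t) (hr0 t) (hθ' t) hpolar
    rw [cross_smul_right, hang, smul_smul] at h
    have hscalar := smul_left_injective ℝ ez_ne_zero h
    field_simp at hscalar
    linarith
  set F := fun t => p t - (m ^ 2 * k / L) • azimuthalUnit (θ t)
  have hF : ∀ t, HasDerivAt F 0 t := fun t => by
    have hv := (hasDerivAt_azimuthalUnit (hθ' t)).const_smul (m ^ 2 * k / L)
    refine ((hp t).sub hv).congr_deriv ?_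
    have hforce := kepler_force_eq_smul_deriv_azimuthalUnit (k := k) hm.ne' hL
      (norm_ne_zero_iff.mpr (hr0 t)) (hrate t) (θ t)
    rw [← hpolar t] at hforce
    rw [hforce, sub_self]
  have hconst : ∀ t, F t = F 0 := fun t =>
    is_const_of_deriv_eq_zero (fun s => (hF s).differentiableAt) (fun s => (hF s).deriv) t 0
  refine ⟨F 0, fun t => ?_, fun t => ?_⟩
  · rw [← hconst t]
    simp [F, azimuthalUnit]
  · rw [← hconst t]
    simp [F, norm_smul, norm_azimuthalUnit, abs_of_pos hk]
end

section
/- For a Kepler motion with nonzero angular momentum L = L e_z, whose hodograph is the circle of radius R = m²k/|L| centered at c = c e_y, the energy satisfies 2mE = ‖c‖² − R², i.e. twice m times the energy equals the power of the origin with respect to the hodograph circle. -/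
open Real

lemma cross_polar_hodograph (n R c θ : ℝ) :
    cross (n • (cos θ • ex + sin θ • ey)) (R • (-sin θ • ex + cos θ • ey) + c • ey) =
      (n * (R + c * cos θ)) • ez := by
  ext i
  fin_cases i <;> simp [cross, ex, ey, ez]
  linear_combination n * R * sin_sq_add_cos_sq θ

lemma norm_hodograph_sq (R c θ : ℝ) :
    ‖R • (-sin θ • ex + cos θ • ey) + c • ey‖ ^ 2 = R ^ 2 + 2 * R * c * cos θ + c ^ 2 := by
  rw [EuclideanSpace.norm_eq, sq_sqrt (by positivity)]
  simp [Fin.sum_univ_three, ex, ey]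
  linear_combination R ^ 2 * sin_sq_add_cos_sq θ

theorem kepler_energy_power_of_origin_general
    (m k L c : ℝ) (hm : 0 < m) (hL : L ≠ 0)
    (r p : ℝ → EuclideanSpace ℝ (Fin 3))
    (hang : ∀ t, cross (r t) (p t) = L • ez)
    (θ : ℝ → ℝ)
    (hθ : ∀ t, r t = ‖r t‖ • (Real.cos (θ t) • ex + Real.sin (θ t) • ey))
    (hhodo : ∀ t, p t =
      (m ^ 2 * k / L) • (-Real.sin (θ t) • ex + Real.cos (θ t) • ey) + c • ey) :
    ∀ t, 2 * m * (‖p t‖ ^ 2 / (2 * m) - m * k / ‖r t‖) =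
      c ^ 2 - (m ^ 2 * k / |L|) ^ 2 := by
  intro t
  have hcross := hang t
  rw [hθ t, hhodo t, cross_polar_hodograph] at hcross
  have hLr : ‖r t‖ * (m ^ 2 * k / L + c * cos (θ t)) = L :=
    smul_left_injective ℝ (by simp [ez]) hcross
  have hr_ne : ‖r t‖ ≠ 0 := left_ne_zero_of_mul (hLr ▸ hL)
  rw [hhodo t, norm_hodograph_sq, div_pow _ |L|, sq_abs, ← div_pow]
  field_simp at hLr ⊢
  linear_combination 2 * m ^ 2 * k * hLr

/-- For a Kepler motion with nonzero angular momentum `r × p = L e_z`,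
whose hodograph is the circle of radius `R = m²k/|L|` centered at `c e_y`
(i.e. `p = (m²k/L)(-sin θ e_x + cos θ e_y) + c e_y`), the energy satisfies
`2mE = c² - R²`: twice `m` times the energy is the power of the origin with
respect to the hodograph circle. -/
theorem kepler_energy_power_of_origin
    (m k L c : ℝ) (hm : 0 < m) (hk : 0 < k) (hL : L ≠ 0)
    (r p : ℝ → EuclideanSpace ℝ (Fin 3))
    (hr0 : ∀ t, r t ≠ 0)
    (hr : ∀ t, HasDerivAt r ((1 / m) • p t) t)
    (hp : ∀ t, HasDerivAt p (-(k * m / ‖r t‖ ^ 3) • r t) t)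
    (hang : ∀ t, cross (r t) (p t) = L • ez)
    (θ : ℝ → ℝ) (hθdiff : Differentiable ℝ θ)
    (hθ : ∀ t, r t = ‖r t‖ • (Real.cos (θ t) • ex + Real.sin (θ t) • ey))
    (hhodo : ∀ t, p t =
      (m ^ 2 * k / L) • (-Real.sin (θ t) • ex + Real.cos (θ t) • ey) + c • ey) :
    ∀ t, 2 * m * (‖p t‖ ^ 2 / (2 * m) - m * k / ‖r t‖) =
      c ^ 2 - (m ^ 2 * k / |L|) ^ 2 :=
  kepler_energy_power_of_origin_general m k L c hm hL r p hang θ hθ hhodo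
end

section
/- Along any solution t ↦ (r(t), p(t)) of the Kepler equations dr/dt = p/m, dp/dt = −km r/‖r‖³, the function t ↦ (p(t)·r(t) − 2E(r(t),p(t)) t)/(mk) has derivative 1/‖r(t)‖. -/
/-!
The energy `E = ‖p‖²/(2m) - mk/‖r‖` is conserved, while the virial identity gives
`d⟪p, r⟫/dt = ‖p‖²/m - mk/‖r‖ = 2E + mk/‖r‖`. Hence `⟪p, r⟫ - 2Et` has derivative `mk/‖r‖`.
-/

open RealInnerProductSpace

variable {E : Type*} [NormedAddCommGroup E] [InnerProductSpace ℝ E]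

theorem HasDerivAt.norm {f : ℝ → E} {f' : E} {x : ℝ} (hf : HasDerivAt f f' x) (h0 : f x ≠ 0) :
    HasDerivAt (fun y => ‖f y‖) (⟪f x, f'⟫ / ‖f x‖) x := by
  have h := hf.norm_sq.sqrt (by positivity)
  simp only [Real.sqrt_sq (norm_nonneg _)] at h
  convert h using 1
  field_simp

noncomputable def keplerEnergy (m k : ℝ) (r p : E) : ℝ := ‖p‖ ^ 2 / (2 * m) - m * k / ‖r‖

section KeplerFlow

variable {m k t : ℝ} {r p : ℝ → E}

theorem hasDerivAt_keplerEnergy (hm : m ≠ 0) (hr0 : r t ≠ 0)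
    (hr : HasDerivAt r ((1 / m) • p t) t)
    (hp : HasDerivAt p (-(k * m / ‖r t‖ ^ 3) • r t) t) :
    HasDerivAt (fun t => keplerEnergy m k (r t) (p t)) 0 t := by
  have hrn : ‖r t‖ ≠ 0 := norm_ne_zero_iff.2 hr0
  have h := (hp.norm_sq.div_const (2 * m)).sub
    ((hasDerivAt_const t (m * k)).fun_div (hr.norm hr0) hrn)
  refine h.congr_deriv ?_
  simp only [inner_smul_right, real_inner_comm (p t) (r t)]
  field_simp
  ring

theorem hasDerivAt_inner_momentum_position
    (hr : HasDerivAt r ((1 / m) • p t) t)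
    (hp : HasDerivAt p (-(k * m / ‖r t‖ ^ 3) • r t) t) :
    HasDerivAt (fun t => ⟪p t, r t⟫)
      (2 * keplerEnergy m k (r t) (p t) + m * k / ‖r t‖) t := by
  refine (hp.inner ℝ hr).congr_deriv ?_
  simp only [keplerEnergy, inner_smul_left, inner_smul_right, real_inner_self_eq_norm_sq,
    RCLike.conj_to_real]
  rcases eq_or_ne ‖r t‖ 0 with h0 | h0
  · simp [h0]
    ring
  · field_simp
    ring

end KeplerFlow

/-- Along any solution `t ↦ (r t, p t)` of the Kepler equations
`dr/dt = p/m`, `dp/dt = -km r/‖r‖³`, the function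
`t ↦ (p(t)·r(t) - 2 E(r(t),p(t)) t)/(mk)` has derivative `1/‖r(t)‖`,
where `E(r,p) = ‖p‖²/(2m) - mk/‖r‖`. -/
theorem kepler_levi_civita_derivative
    (m k : ℝ) (hm : 0 < m) (hk : 0 < k)
    (r p : ℝ → EuclideanSpace ℝ (Fin 3))
    (hr0 : ∀ t, r t ≠ 0)
    (hr : ∀ t, HasDerivAt r ((1 / m) • p t) t)
    (hp : ∀ t, HasDerivAt p (-(k * m / ‖r t‖ ^ 3) • r t) t) :
    ∀ t : ℝ, HasDerivAt
      (fun t => (inner ℝ (p t) (r t) -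
        2 * (‖p t‖ ^ 2 / (2 * m) - m * k / ‖r t‖) * t) / (m * k) : ℝ → ℝ)
      (1 / ‖r t‖) t := by
  intro t
  have hE := hasDerivAt_keplerEnergy hm.ne' (hr0 t) (hr t) (hp t)
  have hPR := hasDerivAt_inner_momentum_position (hr t) (hp t)
  have h := (hPR.sub ((hE.const_mul 2).mul (hasDerivAt_id t))).div_const (m * k)
  refine h.congr_deriv ?_
  field_simp
  ring
end

section
/- Under the cotangent-lifted stereographic projection S_ρ with the formulas p = ρ μ/(ρ−h), r = ((ρ−h)/ρ)W₃ + (W_h/ρ)μ, the pullback identity r·dp = W·d(OM) holds, i.e. r·dp = W₃·dμ + ζ W_h dh as 1-forms on T*(Q_ρ∖{N}). -/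
/-!
Differentiating `p = (ρ / (ρ - h)) • μ` gives `p' = (ρ / (ρ - h)) • μ' + (ρ h' / (ρ - h)²) • μ`.
Pairing with `r` and eliminating `⟪W₃, μ⟫`, `⟪μ, μ'⟫` and `‖μ‖²` through the tangency condition,
the differentiated constraint `h h' + ζ ⟪μ, μ'⟫ = 0` and the constraint itself, every term except
`⟪W₃, μ'⟫ + ζ W_h h'` cancels; the cancellation uses `ζ⁻¹ = ζ`.
-/

open scoped RealInnerProductSpace

section

variable {E : Type*} [NormedAddCommGroup E] [InnerProductSpace ℝ E]

theorem hasDerivAt_div_sub_smul {F : Type*} [NormedAddCommGroup F] [NormedSpace ℝ F]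
    {ρ t h' : ℝ} {h : ℝ → ℝ} {μ : ℝ → F} {μ' : F}
    (hμ : HasDerivAt μ μ' t) (hh : HasDerivAt h h' t) (hne : ρ - h t ≠ 0) :
    HasDerivAt (fun s => (ρ / (ρ - h s)) • μ s)
      ((ρ / (ρ - h t)) • μ' + (ρ * h' / (ρ - h t) ^ 2) • μ t) t := by
  have hscalar : HasDerivAt (fun s => ρ / (ρ - h s)) (ρ * h' / (ρ - h t) ^ 2) t := by
    refine ((hasDerivAt_const t ρ).fun_div (hh.const_sub ρ) hne).congr_deriv ?_
    ring
  exact hscalar.smul hμ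

theorem mul_deriv_add_inner_eq_zero_of_sq_add_norm_sq_eq_const {ζ c t h' : ℝ} {h : ℝ → ℝ}
    {μ : ℝ → E} {μ' : E} (hQ : ∀ s, h s ^ 2 + ζ * ‖μ s‖ ^ 2 = c)
    (hμ : HasDerivAt μ μ' t) (hh : HasDerivAt h h' t) :
    h t * h' + ζ * ⟪μ t, μ'⟫ = 0 := by
  have hderiv : HasDerivAt (fun s => h s ^ 2 + ζ * ‖μ s‖ ^ 2)
      (2 * h t * h' + ζ * (2 * ⟪μ t, μ'⟫)) t := by
    simpa using (hh.fun_pow 2).fun_add (hμ.norm_sq.const_mul ζ)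
  rw [funext hQ] at hderiv
  linear_combination hderiv.unique (hasDerivAt_const t c) / 2

theorem inner_stereographic_lift_eq {ζ ρ h h' Wh : ℝ} {μ μ' W : E} (hζ : ζ ^ 2 = 1)
    (hρ : ρ ≠ 0) (hne : ρ - h ≠ 0) (hQ : h ^ 2 + ζ * ‖μ‖ ^ 2 = ρ ^ 2)
    (htan : ⟪W, μ⟫ + ζ * Wh * h = 0) (hvel : h * h' + ζ * ⟪μ, μ'⟫ = 0) :
    ⟪((ρ - h) / ρ) • W + (Wh / ρ) • μ, (ρ / (ρ - h)) • μ' + (ρ * h' / (ρ - h) ^ 2) • μ⟫ =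
      ⟪W, μ'⟫ + ζ * Wh * h' := by
  have hWμ : ⟪W, μ⟫ = -(ζ * Wh * h) := by linear_combination htan
  have hμμ' : ⟪μ, μ'⟫ = -(ζ * h * h') := by
    linear_combination ζ * hvel - ⟪μ, μ'⟫ * hζ
  have hμμ : ⟪μ, μ⟫ = ζ * (ρ ^ 2 - h ^ 2) := by
    rw [real_inner_self_eq_norm_sq]
    linear_combination ζ * hQ - ‖μ‖ ^ 2 * hζ
  simp only [inner_add_left, inner_add_right, real_inner_smul_left, real_inner_smul_right]
  rw [hWμ, hμμ', hμμ, real_inner_comm μ' W]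
  field_simp
  ring

end

/-- Under the cotangent-lifted stereographic projection
`p = ρμ/(ρ-h)`, `r = ((ρ-h)/ρ)W₃ + (W_h/ρ)μ`, the pullback identity
`r·dp = W₃·dμ + ζ W_h dh` holds as 1-forms on `T*(Q_ρ∖{N})`: along every
differentiable curve `t ↦ (μ(t), h(t), W₃(t), W_h(t))` in the constraint set,
the pairing of `r` with the derivative of `p` equals `W₃·μ' + ζ W_h h'`. -/
theorem stereographic_lift_pullback_one_form
    (ζ ρ : ℝ) (hζ : ζ = 1 ∨ ζ = -1) (hρ : 0 < ρ)
    (μ W₃ : ℝ → EuclideanSpace ℝ (Fin 3)) (h Wh : ℝ → ℝ)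
    (hQ : ∀ t, (h t) ^ 2 + ζ * ‖μ t‖ ^ 2 = ρ ^ 2)
    (htan : ∀ t, (inner ℝ (W₃ t) (μ t) : ℝ) + ζ * Wh t * h t = 0)
    (hN : ∀ t, h t ≠ ρ)
    (t : ℝ)
    (μ' : EuclideanSpace ℝ (Fin 3)) (h' : ℝ)
    (hμ : HasDerivAt μ μ' t) (hh : HasDerivAt h h' t)
    (p' : EuclideanSpace ℝ (Fin 3))
    (hp : HasDerivAt (fun t => (ρ / (ρ - h t)) • μ t) p' t) :
    (inner ℝ (((ρ - h t) / ρ) • W₃ t + (Wh t / ρ) • μ t) p' : ℝ) =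
      (inner ℝ (W₃ t) μ' : ℝ) + ζ * Wh t * h' := by
  have hne : ρ - h t ≠ 0 := sub_ne_zero.mpr (hN t).symm
  have hζ2 : ζ ^ 2 = 1 := by rcases hζ with rfl | rfl <;> norm_num
  rw [hp.unique (hasDerivAt_div_sub_smul hμ hh hne)]
  exact inner_stereographic_lift_eq hζ2 hρ.ne' hne (hQ t) (htan t)
    (mul_deriv_add_inner_eq_zero_of_sq_add_norm_sq_eq_const hQ hμ hh)
end
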